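/- Let G be a finite connected simple graph on n ≥ 2 vertices. Then the biharmonic index and the Kirchhoff index satisfy B(G) ≥ Kf(G)² / (n(n−1)), with equality if and only if G is isomorphic to the complete graph K_n. -/

import Mathlib

open Matrix Finset

/-- Uniqueness of the Moore-Penrose pseudoinverse. -/
lemma pinv_unique_aux {V : Type*} [Fintype V] [DecidableEq V] (A B C : Matrix V V ℝ)
    (hB1 : A*B*A = A) (hB2 : B*A*B = B) (hB3 : (A*B)ᵀ = A*B) (hB4 : (B*A)ᵀ = B*A)
    (hC1 : A*C*A = A) (hC2 : C*A*C = C) (hC3 : (A*C)ᵀ = A*C) (hC4 : (C*A)ᵀ = C*A) :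
    B = C := by
  have hAB : A*B = A*C := by
    calc A*B = (A*C*A)*B := by rw [hC1]
    _ = (A*C)*(A*B) := by simp only [Matrix.mul_assoc]
    _ = (A*C)ᵀ*(A*B)ᵀ := by rw [hC3, hB3]
    _ = Cᵀ*((A*B*A)ᵀ) := by
        simp only [Matrix.transpose_mul, Matrix.mul_assoc]
    _ = Cᵀ*Aᵀ := by rw [hB1]
    _ = (A*C)ᵀ := by rw [Matrix.transpose_mul]
    _ = A*C := hC3
  have hBA : B*A = C*A := by
    calc B*A = B*(A*C*A) := by rw [hC1]
    _ = (B*A)*(C*A) := by simp only [Matrix.mul_assoc]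
    _ = (B*A)ᵀ*(C*A)ᵀ := by rw [hB4, hC4]
    _ = ((A*B*A)ᵀ)*Cᵀ := by
        simp only [Matrix.transpose_mul, Matrix.mul_assoc]
    _ = Aᵀ*Cᵀ := by rw [hB1]
    _ = (C*A)ᵀ := by rw [Matrix.transpose_mul]
    _ = C*A := hC4
  calc B = B*A*B := hB2.symm
  _ = C*A*B := by rw [hBA]
  _ = C*(A*B) := by rw [Matrix.mul_assoc]
  _ = C*(A*C) := by rw [hAB]
  _ = C*A*C := by rw [Matrix.mul_assoc]
  _ = C := hC2

set_option maxHeartbeats 3000000 in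
/-- Relation between the biharmonic index and the Kirchhoff
index: for a connected graph on `n ≥ 2` vertices,
`B(G) ≥ Kf(G)² / (n(n−1))`, with equality iff `G` is complete. Here
`B(G) = (1/2)·∑_u ∑_v d_B(u,v)²` and `Kf(G) = n · ∑_{k ≠ 0} 1 / lam k`,
where `lam` lists the Laplacian eigenvalues in increasing order. -/
theorem biharmonic_index_ge_kirchhoff_sq
    {V : Type*} [Fintype V] [DecidableEq V] {n : ℕ}
    (G : SimpleGraph V) [DecidableRel G.Adj] (hG : G.Connected)
    (hn : Fintype.card V = n) (hn2 : 2 ≤ n)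
    (Lp : Matrix V V ℝ)
    (hp1 : G.lapMatrix ℝ * Lp * G.lapMatrix ℝ = G.lapMatrix ℝ)
    (hp2 : Lp * G.lapMatrix ℝ * Lp = Lp)
    (hp3 : (G.lapMatrix ℝ * Lp)ᵀ = G.lapMatrix ℝ * Lp)
    (hp4 : (Lp * G.lapMatrix ℝ)ᵀ = Lp * G.lapMatrix ℝ)
    (lam : Fin n → ℝ) (z : Fin n → V → ℝ)
    (horth : ∀ i j, ∑ w, z i w * z j w = if i = j then 1 else 0)
    (heig : ∀ k, G.lapMatrix ℝ *ᵥ z k = lam k • z k)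
    (hmono : Monotone lam)
    (h0 : lam ⟨0, by omega⟩ = 0)
    (hpos : ∀ k : Fin n, k ≠ ⟨0, by omega⟩ → 0 < lam k) :
    (1 / 2 : ℝ) * ∑ u, ∑ v, ((Lp * Lp) u u + (Lp * Lp) v v - 2 * (Lp * Lp) u v)
        ≥ ((n : ℝ) * ∑ k ∈ Finset.univ.erase ⟨0, by omega⟩, 1 / lam k) ^ 2
            / ((n : ℝ) * ((n : ℝ) - 1))
    ∧ ((1 / 2 : ℝ) * ∑ u, ∑ v, ((Lp * Lp) u u + (Lp * Lp) v v - 2 * (Lp * Lp) u v)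
          = ((n : ℝ) * ∑ k ∈ Finset.univ.erase ⟨0, by omega⟩, 1 / lam k) ^ 2
              / ((n : ℝ) * ((n : ℝ) - 1))
        ↔ Nonempty (G ≃g (⊤ : SimpleGraph V))) := by
  have hn0 : 0 < n := by omega
  set L : Matrix V V ℝ := G.lapMatrix ℝ with hLdef
  have hLsym : Lᵀ = L := G.isSymm_lapMatrix (R := ℝ)
  set i0 : Fin n := ⟨0, by omega⟩ with hi0
  set s : Finset (Fin n) := Finset.univ.erase i0 with hs
  -- eigen-equation entrywise
  have heig' : ∀ k u, ∑ v, L u v * z k v = lam k * z k u := by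
    intro k u
    have := congrFun (heig k) u
    simpa [Matrix.mulVec, dotProduct] using this
  -- symmetric entries
  have hLsymm : ∀ u v, L u v = L v u := by
    intro u v
    have := congrFun (congrFun hLsym u) v
    simpa [Matrix.transpose_apply] using this.symm
  -- z i0 is constant
  have hz0const : ∀ u v, z i0 u = z i0 v := by
    have hz0 : Matrix.toLin' L (z i0) = 0 := by
      rw [Matrix.toLin'_apply, heig i0]
      have : lam i0 = 0 := h0
      rw [this, zero_smul]
    intro u v
    exact (G.lapMatrix_mulVec_eq_zero_iff_forall_reachable (x := z i0)).mp (by rwa [Matrix.toLin'_apply] at hz0) u v (hG.preconnected u v)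
  -- nonempty V
  have hVne : Nonempty V := by
    rw [← Fintype.card_pos_iff, hn]; omega
  obtain ⟨u0⟩ := hVne
  set a : ℝ := z i0 u0 with ha
  have hz0a : ∀ u, z i0 u = a := fun u => hz0const u u0
  have hna : (n : ℝ) * (a * a) = 1 := by
    have h1 : ∑ w, z i0 w * z i0 w = 1 := by simpa using horth i0 i0
    rw [← h1]
    rw [Finset.sum_congr rfl (fun u _ => by rw [hz0a u])]
    simp [Finset.card_univ, hn, mul_comm]
  have hane : a ≠ 0 := by
    intro h; rw [h] at hna; simp at hna
  have ha2 : a * a = 1 / (n : ℝ) := by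
    field_simp
    linarith [hna]
  -- sum of z k is zero for k ≠ i0
  have hsum0 : ∀ k, k ≠ i0 → ∑ u, z k u = 0 := by
    intro k hk
    have h := horth k i0
    rw [if_neg hk] at h
    have h2 : (∑ u, z k u) * a = 0 := by
      rw [← h, Finset.sum_mul]
      exact Finset.sum_congr rfl (fun u _ => by rw [hz0a u])
    exact (mul_eq_zero.mp h2).resolve_right hane
  -- completeness relation : ∑ k, z k u * z k v = δ
  have hcomp : ∀ u v, ∑ k, z k u * z k v = if u = v then (1:ℝ) else 0 := by
    let e : V ≃ Fin n := Fintype.equivFinOfCardEq hn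
    let Z : Matrix (Fin n) (Fin n) ℝ := fun i j => z i (e.symm j)
    have hZZ : Z * Zᵀ = 1 := by
      ext i j
      rw [Matrix.mul_apply]
      simp only [Matrix.transpose_apply]
      rw [show (∑ j', Z i j' * Z j j') = ∑ w, z i w * z j w from
        Equiv.sum_comp e.symm (fun w => z i w * z j w)]
      rw [horth i j, Matrix.one_apply]
    have hZZ' : Zᵀ * Z = 1 := mul_eq_one_comm.mp hZZ
    intro u v
    have h := congrFun (congrFun hZZ' (e u)) (e v)
    rw [Matrix.mul_apply] at h
    simp only [Matrix.transpose_apply, Matrix.one_apply, Z, Equiv.symm_apply_apply,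
      EmbeddingLike.apply_eq_iff_eq, Matrix.transpose, Matrix.of_apply] at h
    exact h
  -- spectral decomposition of L
  have hLspec : ∀ u v, L u v = ∑ k, lam k * (z k u * z k v) := by
    intro u v
    calc L u v = ∑ w, L u w * (if w = v then (1:ℝ) else 0) := by
          simp [mul_ite]
      _ = ∑ w, L u w * ∑ k, z k w * z k v := by
          exact Finset.sum_congr rfl (fun w _ => by rw [hcomp w v])
      _ = ∑ k, (∑ w, L u w * z k w) * z k v := by
          simp_rw [Finset.mul_sum]
          rw [Finset.sum_comm]
          exact Finset.sum_congr rfl fun k _ => by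
            rw [Finset.sum_mul]
            exact Finset.sum_congr rfl fun w _ => by ring
      _ = ∑ k, lam k * (z k u * z k v) := by
          refine Finset.sum_congr rfl (fun k _ => ?_)
          rw [heig' k u]; ring
  -- definitions of M and P
  have hlamne : ∀ k ∈ s, lam k ≠ 0 := fun k hk => ne_of_gt (hpos k (Finset.ne_of_mem_erase hk))
  set M : Matrix V V ℝ := Matrix.of fun u v => ∑ k ∈ s, (lam k)⁻¹ * (z k u * z k v) with hM
  set P : Matrix V V ℝ := Matrix.of fun u v => ∑ k ∈ s, z k u * z k v with hP
  have hLM : L * M = P := by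
    ext u v
    rw [Matrix.mul_apply]
    show ∑ w, L u w * ∑ k ∈ s, (lam k)⁻¹ * (z k w * z k v) = ∑ k ∈ s, z k u * z k v
    simp_rw [Finset.mul_sum]
    rw [Finset.sum_comm]
    refine Finset.sum_congr rfl fun k hk => ?_
    calc ∑ w, L u w * ((lam k)⁻¹ * (z k w * z k v))
        = (lam k)⁻¹ * z k v * ∑ w, L u w * z k w := by
          rw [Finset.mul_sum]; exact Finset.sum_congr rfl fun w _ => by ring
      _ = (lam k)⁻¹ * z k v * (lam k * z k u) := by rw [heig' k u]
      _ = z k u * z k v := by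
          have h := hlamne k hk; field_simp
  have hML : M * L = P := by
    ext u v
    rw [Matrix.mul_apply]
    show ∑ w, (∑ k ∈ s, (lam k)⁻¹ * (z k u * z k w)) * L w v = ∑ k ∈ s, z k u * z k v
    simp_rw [Finset.sum_mul]
    rw [Finset.sum_comm]
    refine Finset.sum_congr rfl fun k hk => ?_
    calc ∑ w, (lam k)⁻¹ * (z k u * z k w) * L w v
        = (lam k)⁻¹ * z k u * ∑ w, L v w * z k w := by
          rw [Finset.mul_sum]
          exact Finset.sum_congr rfl fun w _ => by rw [← hLsymm w v]; ring
      _ = (lam k)⁻¹ * z k u * (lam k * z k v) := by rw [heig' k v]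
      _ = z k u * z k v := by
          have h := hlamne k hk; field_simp
  have hPM : P * M = M := by
    ext u v
    rw [Matrix.mul_apply]
    show ∑ w, (∑ k ∈ s, z k u * z k w) * (∑ l ∈ s, (lam l)⁻¹ * (z l w * z l v))
        = ∑ k ∈ s, (lam k)⁻¹ * (z k u * z k v)
    simp_rw [Finset.sum_mul, Finset.mul_sum]
    rw [Finset.sum_comm]
    refine Finset.sum_congr rfl fun k hk => ?_
    rw [Finset.sum_comm]
    calc ∑ l ∈ s, ∑ w, z k u * z k w * ((lam l)⁻¹ * (z l w * z l v))
        = ∑ l ∈ s, (z k u * ((lam l)⁻¹ * z l v)) * ∑ w, z k w * z l w := by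
          refine Finset.sum_congr rfl fun l hl => ?_
          rw [Finset.mul_sum]
          exact Finset.sum_congr rfl fun w _ => by ring
      _ = ∑ l ∈ s, (z k u * ((lam l)⁻¹ * z l v)) * (if k = l then 1 else 0) := by
          refine Finset.sum_congr rfl fun l hl => by rw [horth k l]
      _ = (lam k)⁻¹ * (z k u * z k v) := by
          simp_rw [mul_ite, mul_one, mul_zero]
          rw [Finset.sum_ite_eq s k _, if_pos hk]
          ring
  have hPL : P * L = L := by
    ext u v
    rw [Matrix.mul_apply]
    show ∑ w, (∑ k ∈ s, z k u * z k w) * L w v = L u v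
    simp_rw [Finset.sum_mul]
    rw [Finset.sum_comm]
    calc ∑ k ∈ s, ∑ w, z k u * z k w * L w v
        = ∑ k ∈ s, lam k * (z k u * z k v) := by
          refine Finset.sum_congr rfl fun k hk => ?_
          calc ∑ w, z k u * z k w * L w v = z k u * ∑ w, L v w * z k w := by
                rw [Finset.mul_sum]
                exact Finset.sum_congr rfl fun w _ => by rw [← hLsymm w v]; ring
          _ = z k u * (lam k * z k v) := by rw [heig' k v]
          _ = lam k * (z k u * z k v) := by ring
      _ = ∑ k, lam k * (z k u * z k v) := by
          rw [← Finset.add_sum_erase Finset.univ (fun k => lam k * (z k u * z k v))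
            (Finset.mem_univ i0)]
          have : lam i0 = 0 := h0
          rw [this]; simp [hs]
      _ = L u v := (hLspec u v).symm
  have hPsym : Pᵀ = P := by
    ext u v
    show (∑ k ∈ s, z k v * z k u) = ∑ k ∈ s, z k u * z k v
    exact Finset.sum_congr rfl fun k _ => mul_comm _ _
  -- Penrose conditions for M
  have hm1 : L * M * L = L := by rw [hLM, hPL]
  have hm2 : M * L * M = M := by rw [hML, hPM]
  have hm3 : (L * M)ᵀ = L * M := by rw [hLM, hPsym]
  have hm4 : (M * L)ᵀ = M * L := by rw [hML, hPsym]
  have hLpM : Lp = M := pinv_unique_aux L Lp M hp1 hp2 hp3 hp4 hm1 hm2 hm3 hm4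
  -- entries of M * M
  have hM2 : ∀ u v, (M * M) u v = ∑ k ∈ s, ((lam k)⁻¹)^2 * (z k u * z k v) := by
    intro u v
    rw [Matrix.mul_apply]
    show ∑ w, (∑ k ∈ s, (lam k)⁻¹ * (z k u * z k w)) * (∑ l ∈ s, (lam l)⁻¹ * (z l w * z l v)) = _
    simp_rw [Finset.sum_mul, Finset.mul_sum]
    rw [Finset.sum_comm]
    refine Finset.sum_congr rfl fun k hk => ?_
    rw [Finset.sum_comm]
    calc ∑ l ∈ s, ∑ w, (lam k)⁻¹ * (z k u * z k w) * ((lam l)⁻¹ * (z l w * z l v))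
        = ∑ l ∈ s, ((lam k)⁻¹ * z k u * ((lam l)⁻¹ * z l v)) * ∑ w, z k w * z l w := by
          refine Finset.sum_congr rfl fun l hl => ?_
          rw [Finset.mul_sum]
          exact Finset.sum_congr rfl fun w _ => by ring
      _ = ∑ l ∈ s, ((lam k)⁻¹ * z k u * ((lam l)⁻¹ * z l v)) * (if k = l then 1 else 0) := by
          refine Finset.sum_congr rfl fun l hl => by rw [horth k l]
      _ = ((lam k)⁻¹)^2 * (z k u * z k v) := by
          simp_rw [mul_ite, mul_one, mul_zero]
          rw [Finset.sum_ite_eq s k _, if_pos hk]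
          ring
  -- trace and total sums
  set T : ℝ := ∑ k ∈ s, ((lam k)⁻¹)^2 with hT
  set S : ℝ := ∑ k ∈ s, (lam k)⁻¹ with hSdef
  have htr : ∑ u, (M * M) u u = T := by
    simp_rw [hM2]
    rw [Finset.sum_comm]
    refine Finset.sum_congr rfl fun k hk => ?_
    rw [← Finset.mul_sum]
    have : ∑ u, z k u * z k u = 1 := by simpa using horth k k
    rw [this, mul_one]
  have hrow : ∀ u, ∑ v, (M * M) u v = 0 := by
    intro u
    simp_rw [hM2]
    rw [Finset.sum_comm]
    refine Finset.sum_eq_zero fun k hk => ?_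
    have h1 : ∑ v, ((lam k)⁻¹)^2 * (z k u * z k v) = ((lam k)⁻¹)^2 * z k u * ∑ v, z k v := by
      rw [Finset.mul_sum]; exact Finset.sum_congr rfl fun v _ => by ring
    rw [h1, hsum0 k (Finset.ne_of_mem_erase hk), mul_zero]
  -- LHS equals n * T
  have hLHS : (1/2 : ℝ) * ∑ u, ∑ v, ((Lp*Lp) u u + (Lp*Lp) v v - 2*(Lp*Lp) u v)
      = (n:ℝ) * T := by
    rw [hLpM]
    have h1 : ∀ u : V, ∑ v, ((M*M) u u + (M*M) v v - 2*(M*M) u v)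
        = (n:ℝ) * (M*M) u u + T := by
      intro u
      rw [Finset.sum_sub_distrib, Finset.sum_add_distrib, Finset.sum_const, ← Finset.mul_sum,
        htr, hrow u, mul_zero, sub_zero, Finset.card_univ, hn, nsmul_eq_mul]
    rw [Finset.sum_congr rfl fun u _ => h1 u]
    rw [Finset.sum_add_distrib, Finset.sum_const, ← Finset.mul_sum, htr, Finset.card_univ, hn,
      nsmul_eq_mul]
    ring
  -- translate goal sum
  have hgoalS : (∑ k ∈ Finset.univ.erase (⟨0, by omega⟩ : Fin n), 1 / lam k) = S := by
    simp_rw [one_div]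
    rfl
  -- cardinality
  have hcardR : ((s.card : ℕ) : ℝ) = (n:ℝ) - 1 := by
    rw [hs, Finset.card_erase_of_mem (Finset.mem_univ i0), Finset.card_univ, Fintype.card_fin]
    have : 1 ≤ n := by omega
    push_cast [Nat.cast_sub this]
    ring
  -- key identity
  have hkey : ∑ k ∈ s, ∑ l ∈ s, ((lam k)⁻¹ - (lam l)⁻¹)^2 = 2*(((n:ℝ)-1) * T - S^2) := by
    have h1 : ∀ k ∈ s, ∑ l ∈ s, ((lam k)⁻¹ - (lam l)⁻¹)^2
        = (s.card : ℝ) * ((lam k)⁻¹)^2 - 2 * (lam k)⁻¹ * S + T := by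
      intro k hk
      have expand : ∀ l, ((lam k)⁻¹ - (lam l)⁻¹)^2
          = ((lam k)⁻¹)^2 - 2 * (lam k)⁻¹ * (lam l)⁻¹ + ((lam l)⁻¹)^2 := fun l => by ring
      simp_rw [expand]
      rw [Finset.sum_add_distrib, Finset.sum_sub_distrib, Finset.sum_const, ← Finset.mul_sum,
        nsmul_eq_mul]
    rw [Finset.sum_congr rfl h1]
    rw [Finset.sum_add_distrib, Finset.sum_sub_distrib, Finset.sum_const, ← Finset.mul_sum,
      ← Finset.sum_mul, ← Finset.mul_sum, nsmul_eq_mul, hcardR]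
    rw [← hSdef, ← hT]
    ring
  have hsqnn : 0 ≤ ∑ k ∈ s, ∑ l ∈ s, ((lam k)⁻¹ - (lam l)⁻¹)^2 :=
    Finset.sum_nonneg fun k _ => Finset.sum_nonneg fun l _ => sq_nonneg _
  have hnR : (2:ℝ) ≤ (n:ℝ) := by exact_mod_cast hn2
  have hdenpos : (0:ℝ) < (n:ℝ) * ((n:ℝ) - 1) := by nlinarith
  have hCS : S^2 ≤ ((n:ℝ)-1) * T := by nlinarith [hkey, hsqnn]
  rw [hgoalS, hLHS]
  constructor
  · rw [ge_iff_le, div_le_iff₀ hdenpos]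
    nlinarith [mul_nonneg (sq_nonneg (n:ℝ)) (by linarith : (0:ℝ) ≤ ((n:ℝ)-1)*T - S^2)]
  · have hnne : (n:ℝ) ≠ 0 := by positivity
    have hk1mem : (⟨1, by omega⟩ : Fin n) ∈ s := by
      rw [hs, Finset.mem_erase]
      exact ⟨by simp [hi0, Fin.ext_iff], Finset.mem_univ _⟩
    constructor
    · -- equality implies complete
      intro heq
      rw [eq_div_iff (ne_of_gt hdenpos)] at heq
      have h2 : ((n:ℝ)^2) * (((n:ℝ)-1) * T) = ((n:ℝ)^2) * S^2 := by linear_combination heq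
      have h3 : ((n:ℝ)-1) * T = S^2 := mul_left_cancel₀ (pow_ne_zero 2 hnne) h2
      have hzero : ∑ k ∈ s, ∑ l ∈ s, ((lam k)⁻¹ - (lam l)⁻¹)^2 = 0 := by
        rw [hkey]; linarith
      have hlameq : ∀ k ∈ s, ∀ l ∈ s, lam k = lam l := by
        intro k hk l hl
        have h4 := (Finset.sum_eq_zero_iff_of_nonneg
          (fun k _ => Finset.sum_nonneg fun l _ => sq_nonneg _)).mp hzero k hk
        have h5 := (Finset.sum_eq_zero_iff_of_nonneg (fun l _ => sq_nonneg _)).mp h4 l hl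
        have h6 : (lam k)⁻¹ = (lam l)⁻¹ := by
          have := pow_eq_zero_iff (n := 2) (by norm_num) |>.mp h5
          linarith [this]
        exact inv_injective h6
      set k1 : Fin n := ⟨1, by omega⟩ with hk1
      have hc : 0 < lam k1 := hpos k1 (Finset.ne_of_mem_erase hk1mem)
      have hadj : ∀ u v : V, u ≠ v → G.Adj u v := by
        intro u v huv
        have hLuv : L u v = -(lam k1) * (1/(n:ℝ)) := by
          rw [hLspec u v]
          calc ∑ k, lam k * (z k u * z k v)
              = ∑ k ∈ s, lam k * (z k u * z k v) := by
                rw [← Finset.add_sum_erase Finset.univ (fun k => lam k * (z k u * z k v))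
                  (Finset.mem_univ i0)]
                have : lam i0 = 0 := h0
                rw [this]; simp [hs]
            _ = ∑ k ∈ s, lam k1 * (z k u * z k v) := by
                exact Finset.sum_congr rfl fun k hk => by rw [hlameq k hk k1 hk1mem]
            _ = lam k1 * ∑ k ∈ s, z k u * z k v := by rw [Finset.mul_sum]
            _ = lam k1 * (0 - a * a) := by
                have hsplit : ∑ k ∈ s, z k u * z k v
                    = (∑ k, z k u * z k v) - z i0 u * z i0 v := by
                  rw [← Finset.add_sum_erase Finset.univ (fun k => z k u * z k v)
                    (Finset.mem_univ i0)]
                  rw [hs]; ring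
                rw [hsplit, hcomp u v, if_neg huv, hz0a u, hz0a v]
            _ = -(lam k1) * (1/(n:ℝ)) := by rw [ha2]; ring
        by_contra hnadj
        have hL0 : L u v = 0 := by
          show (G.lapMatrix ℝ) u v = 0
          simp [SimpleGraph.lapMatrix, SimpleGraph.degMatrix, Matrix.sub_apply,
            Matrix.diagonal_apply_ne _ huv, hnadj]
        rw [hL0] at hLuv
        have hpos2 : 0 < lam k1 * (1/(n:ℝ)) := by positivity
        nlinarith [hLuv]
      refine ⟨⟨Equiv.refl V, ?_⟩⟩
      intro u v
      simp only [Equiv.coe_refl, id_eq, SimpleGraph.top_adj]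
      exact ⟨fun h => hadj u v h, fun h => G.ne_of_adj h⟩
    · -- complete implies equality
      rintro ⟨φ⟩
      have hadj : ∀ u v : V, u ≠ v → G.Adj u v := by
        intro u v huv
        have h := φ.map_rel_iff (a := u) (b := v)
        rw [SimpleGraph.top_adj] at h
        exact h.mp (fun hcon => huv (φ.injective hcon))
      have hlamn : ∀ k ∈ s, lam k = (n:ℝ) := by
        intro k hk
        obtain ⟨u, hu⟩ : ∃ u, z k u ≠ 0 := by
          by_contra h; push_neg at h
          have h1 : ∑ w, z k w * z k w = 1 := by simpa using horth k k
          simp [h] at h1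
        have hsv := hsum0 k (Finset.ne_of_mem_erase hk)
        have hLentry : ∀ v, L u v = if u = v then ((n:ℝ)-1) else -1 := by
          intro v
          by_cases h : u = v
          · subst h
            rw [if_pos rfl]
            show (G.lapMatrix ℝ) u u = (n:ℝ)-1
            have hnbr : G.neighborFinset u = Finset.univ.erase u := by
              ext w
              simp only [SimpleGraph.mem_neighborFinset, Finset.mem_erase, Finset.mem_univ,
                and_true]
              exact ⟨fun h => (G.ne_of_adj h).symm, fun h => hadj u w (Ne.symm h)⟩
            have hdeg : G.degree u = n - 1 := by
              rw [← SimpleGraph.card_neighborFinset_eq_degree, hnbr,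
                Finset.card_erase_of_mem (Finset.mem_univ u), Finset.card_univ, hn]
            simp only [SimpleGraph.lapMatrix, Matrix.sub_apply, SimpleGraph.degMatrix,
              Matrix.diagonal_apply_eq, SimpleGraph.adjMatrix_apply,
              SimpleGraph.irrefl, if_false]
            rw [hdeg]
            have h1 : 1 ≤ n := by omega
            push_cast [Nat.cast_sub h1]
            ring
          · rw [if_neg h]
            show (G.lapMatrix ℝ) u v = -1
            simp [SimpleGraph.lapMatrix, SimpleGraph.degMatrix, Matrix.sub_apply,
              Matrix.diagonal_apply_ne _ h, hadj u v h]
        have h1 : lam k * z k u = (n:ℝ) * z k u := by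
          rw [← heig' k u]
          simp_rw [hLentry]
          have hterm : ∀ v, (if u = v then ((n:ℝ)-1) else -1) * z k v
              = (n:ℝ) * (if u = v then z k v else 0) - z k v := by
            intro v; by_cases h : u = v <;> simp [h] <;> ring
          simp_rw [hterm]
          rw [Finset.sum_sub_distrib, ← Finset.mul_sum,
            Finset.sum_ite_eq Finset.univ u (fun v => z k v), if_pos (Finset.mem_univ u),
            hsv, sub_zero]
        exact mul_right_cancel₀ hu h1
      have hTval : T = ((n:ℝ)-1) * ((n:ℝ)⁻¹)^2 := by
        rw [hT, Finset.sum_congr rfl fun k hk => by rw [hlamn k hk]]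
        rw [Finset.sum_const, nsmul_eq_mul, hcardR]
      have hSval : S = ((n:ℝ)-1) * (n:ℝ)⁻¹ := by
        rw [hSdef, Finset.sum_congr rfl fun k hk => by rw [hlamn k hk]]
        rw [Finset.sum_const, nsmul_eq_mul, hcardR]
      rw [hTval, hSval]
      field_simp
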